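/- arXiv:2102.11239 — 2 statements merged into one kernel-verified Lean document; each statement's English description precedes it below -/
import Mathlib

section
/- Let Λ be a finite index set with at least two elements, let c : Λ → (0,1), and let s > 0 satisfy Σ_{σ∈Λ} c_σ^s = 1. Fix n ≥ 1 and let C : Λ^n → (0,1) satisfy C_{(a_{n−1},…,a_0)} ≤ c_{a_{n−1}} ⋯ c_{a_1} c_{a_0} for every word (a_{n−1},…,a_0) ∈ Λ^n. If t > 0 satisfies Σ_{σ∈Λ^n} C_σ^t = 1, then t ≤ s. (So refining the IFS to generation n can only improve the upper dimension bound.) -/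
set_option maxHeartbeats 1000000 in
/-- Let `c : Λ → (0,1)` with `∑ σ, c σ ^ s = 1`, `s > 0`. If the
generation-`n` contraction factors `C : Λ^n → (0,1)` satisfy
`C σ ≤ c (σ 0) ⋯ c (σ (n-1))` (product of factors of the word) and `t > 0` solves
`∑ σ, C σ ^ t = 1`, then `t ≤ s`. -/
theorem stmt_5 {Λ : Type*} [Fintype Λ] (hcard : 2 ≤ Fintype.card Λ)
    (c : Λ → ℝ) (hc : ∀ σ, c σ ∈ Set.Ioo (0 : ℝ) 1)
    (s : ℝ) (hs : 0 < s) (hsum : ∑ σ, c σ ^ s = 1)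
    (n : ℕ) (hn : 1 ≤ n)
    (C : (Fin n → Λ) → ℝ) (hC : ∀ σ, C σ ∈ Set.Ioo (0 : ℝ) 1)
    (hCle : ∀ σ : Fin n → Λ, C σ ≤ ∏ i, c (σ i))
    (t : ℝ) (ht : 0 < t) (hsumC : ∑ σ : Fin n → Λ, C σ ^ t = 1) :
    t ≤ s := by
  by_contra h
  push_neg at h
  have key : ∑ σ : Fin n → Λ, C σ ^ s ≤ 1 := by
    have : ∑ σ : Fin n → Λ, C σ ^ s ≤ ∑ σ : Fin n → Λ, ∏ i, c (σ i) ^ s := by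
      apply Finset.sum_le_sum
      intro σ _
      calc C σ ^ s ≤ (∏ i, c (σ i)) ^ s :=
            Real.rpow_le_rpow (hC σ).1.le (hCle σ) hs.le
        _ = ∏ i, c (σ i) ^ s := by
            rw [← Real.finset_prod_rpow _ _ (fun i _ => (hc (σ i)).1.le)]
    calc ∑ σ : Fin n → Λ, C σ ^ s ≤ ∑ σ : Fin n → Λ, ∏ i, c (σ i) ^ s := this
      _ = (∑ a, c a ^ s) ^ n := (Fintype.sum_pow (fun a => c a ^ s) n).symm
      _ = 1 := by rw [hsum, one_pow]
  have hlt : ∑ σ : Fin n → Λ, C σ ^ t < ∑ σ : Fin n → Λ, C σ ^ s := by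
    apply Finset.sum_lt_sum_of_nonempty
    · have : Nonempty Λ := Fintype.card_pos_iff.mp (by omega)
      exact Finset.univ_nonempty
    · intro σ _
      exact Real.rpow_lt_rpow_of_exponent_gt (hC σ).1 (hC σ).2 h
  rw [hsumC] at hlt
  linarith
end

section
/- Let α < −1, let I := [α⁻¹, 1], and suppose g is continuous and strictly decreasing on J := [g(g(1)), 1] with g(g(1)) < 1, g(J) = [α⁻¹, α⁻²] where α = 1/g(1), and α⁻² < g(g(1)). Define Ψ₀(x) := α⁻¹·x and Ψ₁(x) := g⁻¹(α⁻¹·x) for x ∈ I, where g⁻¹ is the inverse of the restriction of g to J. Then Ψ₀(I) = [α⁻¹, α⁻²] ⊆ I, Ψ₁(I) = J ⊆ I, and Ψ₀(I) ∩ Ψ₁(I) = ∅. -/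
/-- Let `α < -1`, `I = [α⁻¹, 1]`, and suppose `g` is continuous and
strictly decreasing on `J = [g (g 1), 1]` with `g (g 1) < 1`, `α = 1 / g 1`,
`g '' J = [α⁻¹, α⁻²]`, and `α⁻² < g (g 1)`. Let `h = g⁻¹` be the inverse of the
restriction of `g` to `J`. With `Ψ₀ x = α⁻¹ * x` and `Ψ₁ x = h (α⁻¹ * x)` on `I`, one
has `Ψ₀ '' I = [α⁻¹, α⁻²] ⊆ I`, `Ψ₁ '' I = J ⊆ I`, and `Ψ₀ '' I ∩ Ψ₁ '' I = ∅`. -/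
theorem stmt_16 (α : ℝ) (hα : α < -1) (g : ℝ → ℝ)
    (hcont : ContinuousOn g (Set.Icc (g (g 1)) 1))
    (hanti : StrictAntiOn g (Set.Icc (g (g 1)) 1))
    (hJ : g (g 1) < 1)
    (hαg : α = 1 / g 1)
    (himg : g '' Set.Icc (g (g 1)) 1 = Set.Icc α⁻¹ (α⁻¹ ^ 2))
    (hsep : α⁻¹ ^ 2 < g (g 1))
    (h : ℝ → ℝ)
    (hinv : Set.InvOn h g (Set.Icc (g (g 1)) 1) (Set.Icc α⁻¹ (α⁻¹ ^ 2)))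
    (hmapsh : Set.MapsTo h (Set.Icc α⁻¹ (α⁻¹ ^ 2)) (Set.Icc (g (g 1)) 1)) :
    (fun x => α⁻¹ * x) '' Set.Icc α⁻¹ 1 = Set.Icc α⁻¹ (α⁻¹ ^ 2) ∧
    Set.Icc α⁻¹ (α⁻¹ ^ 2) ⊆ Set.Icc α⁻¹ 1 ∧
    (fun x => h (α⁻¹ * x)) '' Set.Icc α⁻¹ 1 = Set.Icc (g (g 1)) 1 ∧
    Set.Icc (g (g 1)) 1 ⊆ Set.Icc α⁻¹ 1 ∧
    Disjoint ((fun x => α⁻¹ * x) '' Set.Icc α⁻¹ 1)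
      ((fun x => h (α⁻¹ * x)) '' Set.Icc α⁻¹ 1) := by
  have hα0 : α < 0 := by linarith
  have hαne : α ≠ 0 := ne_of_lt hα0
  have hc : α * α⁻¹ = 1 := mul_inv_cancel₀ hαne
  have hi : α⁻¹ < 0 := inv_lt_zero.mpr hα0
  have hi1 : -1 < α⁻¹ := by nlinarith
  have himg0 : (fun x => α⁻¹ * x) '' Set.Icc α⁻¹ 1 = Set.Icc α⁻¹ (α⁻¹ ^ 2) := by
    ext y
    simp only [Set.mem_image, Set.mem_Icc]
    constructor
    · rintro ⟨x, ⟨h1, h2⟩, rfl⟩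
      constructor <;> nlinarith
    · rintro ⟨h1, h2⟩
      exact ⟨α * y, ⟨by nlinarith, by nlinarith⟩, by field_simp⟩
  have himg1 : (fun x => h (α⁻¹ * x)) '' Set.Icc α⁻¹ 1 = Set.Icc (g (g 1)) 1 := by
    calc (fun x => h (α⁻¹ * x)) '' Set.Icc α⁻¹ 1
        = h '' ((fun x => α⁻¹ * x) '' Set.Icc α⁻¹ 1) := (Set.image_image _ _ _).symm
      _ = h '' (g '' Set.Icc (g (g 1)) 1) := by rw [himg0, himg]
      _ = Set.Icc (g (g 1)) 1 := hinv.1.image_image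
  refine ⟨himg0, Set.Icc_subset_Icc le_rfl (by nlinarith), himg1,
    Set.Icc_subset_Icc (by nlinarith [sq_nonneg α⁻¹]) le_rfl, ?_⟩
  rw [himg0, himg1]
  rw [Set.disjoint_left]
  rintro x ⟨_, hx2⟩ ⟨hx3, _⟩
  linarith
end
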